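/- arXiv:cs/0608091 — 3 statements merged into one kernel-verified Lean document; each statement's English description precedes it below -/
import Mathlib

section
/- For all natural numbers ℓ₁, ℓ₂ ≥ 1 with ℓ₁ ≤ ℓ₂ and ℓ = ℓ₁ + ℓ₂, we have ℓ₁·log₂(ℓ₁) + ℓ₂·log₂(ℓ₂) + 2·ℓ₁ ≤ ℓ·log₂(ℓ). -/
/-!
Put `p = ℓ₁ / ℓ ≤ 1/2`. Dividing by `ℓ`, the inequality says that the binary entropy `H(p)`
(in bits) is at least `2p`. This holds on `[0, 1/2]` because `H` is concave with `H(0) = 0`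
and `H(1/2) = 1`, so its graph lies above the chord `p ↦ 2p`.
-/

open Real

theorem two_mul_mul_log_two_le_binEntropy {p : ℝ} (hp₀ : 0 ≤ p) (hp : p ≤ 2⁻¹) :
    2 * p * log 2 ≤ binEntropy p := by
  have h := strictConcave_binEntropy.concaveOn.2 (show (0 : ℝ) ∈ Set.Icc 0 1 by simp)
    (show (2⁻¹ : ℝ) ∈ Set.Icc 0 1 by norm_num) (show 0 ≤ 1 - 2 * p by linarith)
    (show 0 ≤ 2 * p by linarith) (by ring)
  simp only [smul_eq_mul, binEntropy_zero, binEntropy_two_inv, mul_zero, zero_add] at h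
  rwa [show 2 * p * 2⁻¹ = p by ring] at h

theorem mul_binEntropy_div_add {A B : ℝ} (hAB : A + B ≠ 0) :
    (A + B) * binEntropy (A / (A + B)) = (A + B) * log (A + B) - A * log A - B * log B := by
  have hsplit (x : ℝ) : (A + B) * negMulLog (x / (A + B)) = x * log (A + B) - x * log x := by
    have := negMulLog_mul (A + B) (x / (A + B))
    rw [mul_div_cancel₀ x hAB] at this
    simp only [negMulLog] at this ⊢
    field_simp at this ⊢
    linarith
  have hB : 1 - A / (A + B) = B / (A + B) := by field_simp; ring
  rw [binEntropy_eq_negMulLog_add_negMulLog_one_sub, hB, mul_add, hsplit, hsplit]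
  ring

theorem mul_log_add_mul_log_add_two_mul_log_two_le {A B : ℝ} (hA : 0 ≤ A) (hAB : A ≤ B) :
    A * log A + B * log B + 2 * A * log 2 ≤ (A + B) * log (A + B) := by
  rcases (add_nonneg hA (hA.trans hAB)).eq_or_lt with hn | hn
  · obtain rfl : A = 0 := by linarith
    obtain rfl : B = 0 := by linarith
    simp
  have hp : A / (A + B) ≤ 2⁻¹ := by rw [div_le_iff₀ hn]; linarith
  have h := mul_le_mul_of_nonneg_left
    (two_mul_mul_log_two_le_binEntropy (div_nonneg hA hn.le) hp) hn.le
  rw [mul_binEntropy_div_add hn.ne'] at h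
  field_simp at h
  linarith

theorem merge_log_inequality_general (ℓ₁ ℓ₂ ℓ : ℕ) (h12 : ℓ₁ ≤ ℓ₂)
    (hℓ : ℓ = ℓ₁ + ℓ₂) :
    (ℓ₁ : ℝ) * logb 2 (ℓ₁ : ℝ) + (ℓ₂ : ℝ) * logb 2 (ℓ₂ : ℝ) + 2 * (ℓ₁ : ℝ)
      ≤ (ℓ : ℝ) * logb 2 (ℓ : ℝ) := by
  subst hℓ
  have h := mul_log_add_mul_log_add_two_mul_log_two_le (Nat.cast_nonneg ℓ₁)
    (Nat.cast_le.mpr h12 : (ℓ₁ : ℝ) ≤ ℓ₂)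
  have hlog2 : 0 < log 2 := log_pos one_lt_two
  push_cast
  simp only [logb]
  rw [← mul_le_mul_iff_of_pos_right hlog2]
  field_simp
  linarith

/-- For naturals ℓ₁, ℓ₂ ≥ 1 with ℓ₁ ≤ ℓ₂ and ℓ = ℓ₁ + ℓ₂:
ℓ₁·log₂ ℓ₁ + ℓ₂·log₂ ℓ₂ + 2·ℓ₁ ≤ ℓ·log₂ ℓ. -/
theorem merge_log_inequality (ℓ₁ ℓ₂ ℓ : ℕ) (h1 : 1 ≤ ℓ₁) (h12 : ℓ₁ ≤ ℓ₂)
    (hℓ : ℓ = ℓ₁ + ℓ₂) :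
    (ℓ₁ : ℝ) * logb 2 (ℓ₁ : ℝ) + (ℓ₂ : ℝ) * logb 2 (ℓ₂ : ℝ) + 2 * (ℓ₁ : ℝ)
      ≤ (ℓ : ℝ) * logb 2 (ℓ : ℝ) :=
  merge_log_inequality_general ℓ₁ ℓ₂ ℓ h12 hℓ
end

section
/- Let G be a finite simple graph with no regular cycles. Then the number of edges of the simplification G_s equals the number of edges of G minus the number of regular vertices of G. -/
/-- Let G be a finite simple graph with no regular cycles whose edges are partitioned
into regular paths `p i` (each edge on exactly one path, each regular vertex on
exactly one path).  Then the number of edges of the simplification (= number of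
regular paths) equals the number of edges of G minus the number of regular vertices. -/
theorem simplification_edge_count {V : Type*} [Fintype V] [DecidableEq V]
    (G : SimpleGraph V) [DecidableRel G.Adj]
    (hnoreg : ¬ ∃ (v : V) (c : G.Walk v v), c.IsCycle ∧ ∀ u ∈ c.support, G.degree u = 2)
    {ι : Type*} [Fintype ι] (z₁ z₂ : ι → V) (p : ∀ i, G.Walk (z₁ i) (z₂ i))
    (hpath : ∀ i, (p i).IsPath) (hne : ∀ i, z₁ i ≠ z₂ i)
    (hsing : ∀ i, G.degree (z₁ i) ≠ 2 ∧ G.degree (z₂ i) ≠ 2)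
    (hreg : ∀ i, ∀ v ∈ (p i).support, v ≠ z₁ i → v ≠ z₂ i → G.degree v = 2)
    (hpart : ∀ e ∈ G.edgeFinset, ∃! i, e ∈ (p i).edges)
    (hregone : ∀ v, G.degree v = 2 → ∃! i, v ∈ (p i).support) :
    Fintype.card ι =
      G.edgeFinset.card - (Finset.univ.filter fun v => G.degree v = 2).card := by
  classical
  set L : ι → ℕ := fun i => (p i).length with hLdef
  have hL1 : ∀ i, 1 ≤ L i := fun i =>
    Nat.one_le_iff_ne_zero.mpr fun h0 => hne i ((p i).eq_of_length_eq_zero h0)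
  -- Edge count
  have hE : G.edgeFinset = Finset.univ.biUnion (fun i => (p i).edges.toFinset) := by
    ext e
    simp only [Finset.mem_biUnion, Finset.mem_univ, true_and, List.mem_toFinset]
    constructor
    · intro he; exact (hpart e he).exists
    · rintro ⟨i, hi⟩
      rw [SimpleGraph.mem_edgeFinset]
      exact (p i).edges_subset_edgeSet hi
  have hEcard : G.edgeFinset.card = ∑ i, L i := by
    rw [hE, Finset.card_biUnion]
    · apply Finset.sum_congr rfl
      intro i _
      rw [List.toFinset_card_of_nodup ((hpath i).isTrail.edges_nodup)]
      exact (p i).length_edges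
    · intro i _ j _ hij
      rw [Function.onFun, Finset.disjoint_left]
      intro e hei hej
      simp only [List.mem_toFinset] at hei hej
      have heG : e ∈ G.edgeFinset := by
        rw [SimpleGraph.mem_edgeFinset]; exact (p i).edges_subset_edgeSet hei
      obtain ⟨k, -, huniq⟩ := hpart e heG
      exact hij ((huniq i hei).trans (huniq j hej).symm)
  -- Regular vertex count
  have hR : (Finset.univ.filter fun v => G.degree v = 2) =
      Finset.univ.biUnion
        (fun i => (p i).support.toFinset.filter (fun v => G.degree v = 2)) := by
    ext v
    simp only [Finset.mem_filter, Finset.mem_biUnion, Finset.mem_univ, true_and,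
      List.mem_toFinset]
    constructor
    · intro hd
      obtain ⟨i, hi, -⟩ := hregone v hd
      exact ⟨i, hi, hd⟩
    · rintro ⟨i, -, hd⟩
      exact hd
  have hRcardi : ∀ i,
      ((p i).support.toFinset.filter (fun v => G.degree v = 2)).card = L i - 1 := by
    intro i
    have hset : (p i).support.toFinset.filter (fun v => G.degree v = 2)
        = (p i).support.toFinset \ {z₁ i, z₂ i} := by
      ext v
      simp only [Finset.mem_filter, Finset.mem_sdiff, List.mem_toFinset,
        Finset.mem_insert, Finset.mem_singleton]
      constructor
      · rintro ⟨hv, hd⟩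
        refine ⟨hv, ?_⟩
        rintro (rfl | rfl)
        exacts [(hsing i).1 hd, (hsing i).2 hd]
      · rintro ⟨hv, hne'⟩
        push_neg at hne'
        exact ⟨hv, hreg i v hv hne'.1 hne'.2⟩
    rw [hset, Finset.card_sdiff_of_subset]
    · rw [List.toFinset_card_of_nodup (hpath i).support_nodup,
        SimpleGraph.Walk.length_support,
        Finset.card_insert_of_notMem (by simp [hne i]), Finset.card_singleton]
      have := hL1 i
      simp only [hLdef] at this ⊢
      omega
    · intro v hv
      simp only [Finset.mem_insert, Finset.mem_singleton] at hv
      rw [List.mem_toFinset]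
      rcases hv with rfl | rfl
      · exact (p i).start_mem_support
      · exact (p i).end_mem_support
  have hRcard : (Finset.univ.filter fun v => G.degree v = 2).card = ∑ i, (L i - 1) := by
    rw [hR, Finset.card_biUnion]
    · exact Finset.sum_congr rfl fun i _ => hRcardi i
    · intro i _ j _ hij
      rw [Function.onFun, Finset.disjoint_left]
      intro v hvi hvj
      simp only [Finset.mem_filter, List.mem_toFinset] at hvi hvj
      obtain ⟨k, -, huniq⟩ := hregone v hvi.2
      exact hij ((huniq i hvi.1).trans (huniq j hvj.1).symm)
  rw [hEcard, hRcard]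
  have hsum : ∑ i, L i = ∑ i, (L i - 1) + Fintype.card ι := by
    calc ∑ i, L i = ∑ i, ((L i - 1) + 1) :=
          Finset.sum_congr rfl fun i _ => (Nat.succ_pred_eq_of_pos (hL1 i)).symm
      _ = ∑ i, (L i - 1) + ∑ _i : ι, 1 := Finset.sum_add_distrib
      _ = ∑ i, (L i - 1) + Fintype.card ι := by simp
  omega
end

section
/- Let G be a finite simple graph whose simplification G_s is defined, and suppose an edge {x,y} is inserted where x and y are singular vertices of degree 1 lying on distinct regular paths with singular endpoints z₁ ≠ y and z₂ ≠ x respectively. Then in the simplification of the new graph, the two topological edges {z₁,x} and {y,z₂} are replaced by a single topological edge {z₁,z₂} whose weight is λ_s({z₁,x}) + λ_s({y,z₂}) + λ({x,y}). -/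
namespace SimpleGraph

variable {V : Type*} {G G' : SimpleGraph V} {x y : V}

lemma eq_sup_edge_of_adj_iff (hxy : x ≠ y)
    (h : ∀ a b, G'.Adj a b ↔ G.Adj a b ∨ (a = x ∧ b = y) ∨ (a = y ∧ b = x)) :
    G' = G ⊔ edge x y := by
  ext a b
  rw [h, sup_adj, edge_adj]
  constructor
  · rintro (hab | ⟨rfl, rfl⟩ | ⟨rfl, rfl⟩)
    · exact Or.inl hab
    · exact Or.inr ⟨Or.inl ⟨rfl, rfl⟩, hxy⟩
    · exact Or.inr ⟨Or.inr ⟨rfl, rfl⟩, hxy.symm⟩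
  · rintro (hab | ⟨hab, -⟩)
    · exact Or.inl hab
    · exact Or.inr hab

section Degree

variable [Fintype V] [DecidableRel G.Adj] [DecidableRel (G ⊔ edge x y).Adj]

lemma degree_sup_edge_of_ne {v : V} (hvx : v ≠ x) (hvy : v ≠ y) :
    (G ⊔ edge x y).degree v = G.degree v := by
  unfold degree
  congr 1
  ext u
  simp [edge_adj, hvx, hvy]

lemma degree_sup_edge_left (hxy : x ≠ y) (hnadj : ¬G.Adj x y) :
    (G ⊔ edge x y).degree x = G.degree x + 1 := by
  classical
  have : (G ⊔ edge x y).neighborFinset x = insert y (G.neighborFinset x) := by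
    ext u
    by_cases hu : u = y
    · simp [hu, edge_adj, hxy]
    · simp [edge_adj, hu, hxy]
  rw [← card_neighborFinset_eq_degree, this,
    Finset.card_insert_of_notMem (by simpa using hnadj), card_neighborFinset_eq_degree]

lemma degree_sup_edge_right (hxy : x ≠ y) (hnadj : ¬G.Adj x y) :
    (G ⊔ edge x y).degree y = G.degree y + 1 := by
  classical
  convert degree_sup_edge_left (G := G) hxy.symm (fun h => hnadj h.symm) using 2
  exact congrArg (G ⊔ ·) (edge_comm x y)

end Degree

namespace Walk

lemma IsPath.append_cons {u v : V} {p : G.Walk u x} {q : G.Walk y v} (h : G.Adj x y)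
    (hp : p.IsPath) (hq : q.IsPath) (hdisj : ∀ a ∈ p.support, a ∉ q.support) :
    (p.append (cons h q)).IsPath := by
  rw [isPath_def, support_append, support_cons, List.tail_cons]
  exact hp.support_nodup.append hq.support_nodup hdisj

end Walk

end SimpleGraph

open SimpleGraph Walk

theorem insert_edge_merge_case_general {V : Type*} [Fintype V]
    (G G' : SimpleGraph V) [DecidableRel G.Adj] [DecidableRel G'.Adj]
    (w : Sym2 V → ℝ)
    (x y z₁ z₂ : V) (hxy : x ≠ y) (hnadj : ¬ G.Adj x y)
    (hdx : G.degree x = 1) (hdy : G.degree y = 1)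
    (hG' : ∀ a b, G'.Adj a b ↔ G.Adj a b ∨ (a = x ∧ b = y) ∨ (a = y ∧ b = x))
    (p : G.Walk z₁ x) (q : G.Walk y z₂) (hp : p.IsPath) (hq : q.IsPath)
    (hz₁ : G.degree z₁ ≠ 2) (hz₂ : G.degree z₂ ≠ 2)
    (hz₁x : z₁ ≠ x) (hz₂y : z₂ ≠ y) (hz₁y : z₁ ≠ y) (hz₂x : z₂ ≠ x)
    (hpreg : ∀ v ∈ p.support, v ≠ z₁ → v ≠ x → G.degree v = 2)
    (hqreg : ∀ v ∈ q.support, v ≠ y → v ≠ z₂ → G.degree v = 2)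
    (hdisj : ∀ v ∈ p.support, v ∉ q.support) :
    ∃ r : G'.Walk z₁ z₂, r.IsPath ∧
      G'.degree z₁ ≠ 2 ∧ G'.degree z₂ ≠ 2 ∧
      (∀ v ∈ r.support, v ≠ z₁ → v ≠ z₂ → G'.degree v = 2) ∧
      r.edges.Perm (p.edges ++ s(x, y) :: q.edges) ∧
      (r.edges.map w).sum = (p.edges.map w).sum + (q.edges.map w).sum + w s(x, y) := by
  have hadj : G'.Adj x y := (hG' x y).2 (Or.inr (Or.inl ⟨rfl, rfl⟩))
  obtain rfl := eq_sup_edge_of_adj_iff hxy hG'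
  have hedges : ((p.mapLe le_sup_left).append (cons hadj (q.mapLe le_sup_left))).edges =
      p.edges ++ s(x, y) :: q.edges := by
    simp only [edges_append, edges_cons, edges_mapLe_eq_edges]
  refine ⟨_, (hp.mapLe _).append_cons hadj (hq.mapLe _) (by simpa using hdisj),
    by rwa [degree_sup_edge_of_ne hz₁x hz₁y], by rwa [degree_sup_edge_of_ne hz₂x hz₂y],
    fun v hv hv₁ hv₂ => ?_, List.Perm.of_eq hedges, ?_⟩
  · simp only [support_append, support_cons, List.tail_cons, support_mapLe_eq_support,
      List.mem_append] at hv
    by_cases hvx : v = x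
    · rw [hvx, degree_sup_edge_left hxy hnadj, hdx]
    by_cases hvy : v = y
    · rw [hvy, degree_sup_edge_right hxy hnadj, hdy]
    rw [degree_sup_edge_of_ne hvx hvy]
    exact hv.elim (hpreg v · hv₁ hvx) (hqreg v · hvy hv₂)
  · rw [hedges, List.map_append, List.sum_append, List.map_cons, List.sum_cons]
    ring

/-- Merge case: inserting an edge {x,y} between two degree-1 singular vertices x, y
lying on distinct regular paths (from singular z₁ to x, and from y to singular z₂)
merges the two topological edges {z₁,x} and {y,z₂} into a single topological edge
{z₁,z₂} of weight λs({z₁,x}) + λs({y,z₂}) + λ({x,y}). -/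
theorem insert_edge_merge_case {V : Type*} [Fintype V] [DecidableEq V]
    (G G' : SimpleGraph V) [DecidableRel G.Adj] [DecidableRel G'.Adj]
    (w : Sym2 V → ℝ)
    (hnoreg : ¬ ∃ (v : V) (c : G.Walk v v), c.IsCycle ∧ ∀ u ∈ c.support, G.degree u = 2)
    (x y z₁ z₂ : V) (hxy : x ≠ y) (hnadj : ¬ G.Adj x y)
    (hdx : G.degree x = 1) (hdy : G.degree y = 1)
    (hG' : ∀ a b, G'.Adj a b ↔ G.Adj a b ∨ (a = x ∧ b = y) ∨ (a = y ∧ b = x))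
    (p : G.Walk z₁ x) (q : G.Walk y z₂) (hp : p.IsPath) (hq : q.IsPath)
    (hz₁ : G.degree z₁ ≠ 2) (hz₂ : G.degree z₂ ≠ 2)
    (hz₁x : z₁ ≠ x) (hz₂y : z₂ ≠ y) (hz₁y : z₁ ≠ y) (hz₂x : z₂ ≠ x)
    (hpreg : ∀ v ∈ p.support, v ≠ z₁ → v ≠ x → G.degree v = 2)
    (hqreg : ∀ v ∈ q.support, v ≠ y → v ≠ z₂ → G.degree v = 2)
    (hdisj : ∀ v ∈ p.support, v ∉ q.support) :
    ∃ r : G'.Walk z₁ z₂, r.IsPath ∧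
      G'.degree z₁ ≠ 2 ∧ G'.degree z₂ ≠ 2 ∧
      (∀ v ∈ r.support, v ≠ z₁ → v ≠ z₂ → G'.degree v = 2) ∧
      r.edges.Perm (p.edges ++ s(x, y) :: q.edges) ∧
      (r.edges.map w).sum = (p.edges.map w).sum + (q.edges.map w).sum + w s(x, y) :=
  insert_edge_merge_case_general G G' w x y z₁ z₂ hxy hnadj hdx hdy hG' p q hp hq hz₁ hz₂ hz₁x hz₂y
    hz₁y hz₂x hpreg hqreg hdisj
end
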